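/- For all natural numbers n and positive integers k, the sum ∑_{ℓ=0}^{n} ∑_{m=0}^{n-ℓ} C(n,ℓ) · s₁(n-ℓ, m) · B_m^{(ℓ)} · E_ℓ^{(k)} equals Ch_n^{(k)}, expressing higher-order Changhee numbers through higher-order Bernoulli and Euler numbers. -/

import Mathlib

open Finset

/-- Signed Stirling numbers of the first kind. -/
def s1 : ℕ → ℕ → ℚ
  | 0, 0 => 1
  | 0, _ + 1 => 0
  | n + 1, 0 => -(n : ℚ) * s1 n 0
  | n + 1, l + 1 => s1 n l - (n : ℚ) * s1 n (l + 1)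

/-- Stirling numbers of the second kind. -/
def S2 : ℕ → ℕ → ℚ
  | 0, 0 => 1
  | 0, _ + 1 => 0
  | _ + 1, 0 => 0
  | n + 1, l + 1 => S2 n l + ((l : ℚ) + 1) * S2 n (l + 1)

/-- Order-ℓ Bernoulli numbers, via Stirling inversion of the Daehee numbers. -/
def B (m l : ℕ) : ℚ :=
  ∑ j ∈ range (m + 1), S2 m j * s1 (j + l) l / ((j + l).choose l)

/-- Order-k Euler numbers. -/
def E (k l : ℕ) : ℚ :=
  ∑ j ∈ range (l + 1), (-1/2 : ℚ)^j * ((k + j - 1).choose j) * (j.factorial : ℚ) * S2 l j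

/-- Higher-order Changhee numbers of the first kind. -/
def Ch (k n : ℕ) : ℚ := (-1)^n * n.factorial / 2^n * ((k + n - 1).choose n)

/-!
The triangular matrices `(s1 r m)` and `(S2 m j)` are mutually inverse. Hence Stirling inversion
turns the inner sum over `m` into the Daehee number `s1 n ℓ / C(n, ℓ)`, whose denominator cancels
`C(n, ℓ)`; a second inversion collapses `∑ ℓ, s1 n ℓ * E k ℓ` to the `j = n` term of the sum
defining the Euler numbers, which is `Ch k n`.
-/

theorem s1_eq_zero_of_lt : ∀ {r m : ℕ}, r < m → s1 r m = 0
  | 0, _ + 1, _ => rfl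
  | r + 1, m + 1, h => by
    have h : r < m := Nat.lt_of_succ_lt_succ h
    simp only [s1, s1_eq_zero_of_lt h, s1_eq_zero_of_lt (h.trans m.lt_succ_self), mul_zero,
      sub_zero]

theorem S2_eq_zero_of_lt : ∀ {m j : ℕ}, m < j → S2 m j = 0
  | 0, _ + 1, _ => rfl
  | m + 1, j + 1, h => by
    have h : m < j := Nat.lt_of_succ_lt_succ h
    simp only [S2, S2_eq_zero_of_lt h, S2_eq_zero_of_lt (h.trans j.lt_succ_self), mul_zero,
      add_zero]

theorem sum_s1_succ_mul (r : ℕ) (f : ℕ → ℚ) :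
    ∑ m ∈ range (r + 2), s1 (r + 1) m * f m =
      ∑ m ∈ range (r + 1), s1 r m * f (m + 1) - r * ∑ m ∈ range (r + 1), s1 r m * f m := by
  have hshift : ∑ m ∈ range (r + 1), s1 r (m + 1) * f (m + 1) + s1 r 0 * f 0 =
      ∑ m ∈ range (r + 1), s1 r m * f m := by
    rw [← sum_range_succ' (fun m => s1 r m * f m), sum_range_succ,
      s1_eq_zero_of_lt r.lt_succ_self, zero_mul, add_zero]
  rw [sum_range_succ', ← hshift, mul_add, mul_sum]
  simp only [s1, sub_mul, sum_sub_distrib]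
  ring_nf

theorem sum_s1_mul_S2 : ∀ r j : ℕ, ∑ m ∈ range (r + 1), s1 r m * S2 m j = if j = r then 1 else 0
  | 0, j => by cases j <;> simp [s1, S2]
  | r + 1, 0 => by
    rw [sum_s1_succ_mul, sum_s1_mul_S2 r 0]
    rcases r with _ | r <;> simp [S2]
  | r + 1, j + 1 => by
    have hS2 : ∀ m, s1 r m * S2 (m + 1) (j + 1) =
        s1 r m * S2 m j + (j + 1) * (s1 r m * S2 m (j + 1)) := fun m => by
      simp only [S2]; ring
    rw [sum_s1_succ_mul, sum_congr rfl fun m _ => hS2 m, sum_add_distrib, ← mul_sum,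
      sum_s1_mul_S2 r j, sum_s1_mul_S2 r (j + 1)]
    by_cases hjr : j = r
    · simp [hjr]
    · by_cases hjr' : j + 1 = r
      · subst hjr'
        simp
      · simp [hjr, hjr']

theorem sum_s1_mul_sum_S2 (f : ℕ → ℚ) (r : ℕ) :
    ∑ m ∈ range (r + 1), s1 r m * ∑ j ∈ range (m + 1), S2 m j * f j = f r := by
  have hextend : ∀ m ∈ range (r + 1),
      ∑ j ∈ range (m + 1), S2 m j * f j = ∑ j ∈ range (r + 1), S2 m j * f j := by
    intro m hm
    refine sum_subset (range_subset_range.mpr (mem_range.mp hm)) fun j _ hj => ?_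
    rw [S2_eq_zero_of_lt (by simpa using hj), zero_mul]
  rw [sum_congr rfl fun m hm => by rw [hextend m hm]]
  simp only [mul_sum, ← mul_assoc]
  rw [sum_comm]
  simp only [← sum_mul, sum_s1_mul_S2, ite_mul, one_mul, zero_mul]
  simp

theorem sum_s1_mul_B (r l : ℕ) :
    ∑ m ∈ range (r + 1), s1 r m * B m l = s1 (r + l) l / (r + l).choose l := by
  simpa only [B, mul_div_assoc] using
    sum_s1_mul_sum_S2 (fun j => s1 (j + l) l / (j + l).choose l) r

theorem choose_mul_sum_s1_mul_B {n l : ℕ} (hl : l ≤ n) :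
    (n.choose l : ℚ) * ∑ m ∈ range (n - l + 1), s1 (n - l) m * B m l = s1 n l := by
  have hchoose : (n.choose l : ℚ) ≠ 0 := by exact_mod_cast (Nat.choose_pos hl).ne'
  rw [sum_s1_mul_B, Nat.sub_add_cancel hl, mul_div_cancel₀ _ hchoose]

theorem sum_s1_mul_E (k n : ℕ) :
    ∑ l ∈ range (n + 1), s1 n l * E k l =
      (-1 / 2 : ℚ) ^ n * (k + n - 1).choose n * n.factorial := by
  rw [← sum_s1_mul_sum_S2 (fun j => (-1 / 2 : ℚ) ^ j * (k + j - 1).choose j * j.factorial) n]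
  exact sum_congr rfl fun l _ => congrArg _ (sum_congr rfl fun j _ => by ring)

theorem changhee_from_bernoulli_euler_general (n k : ℕ) :
    ∑ l ∈ range (n + 1), ∑ m ∈ range (n - l + 1),
        (n.choose l : ℚ) * s1 (n - l) m * B m l * E k l = Ch k n := by
  calc ∑ l ∈ range (n + 1), ∑ m ∈ range (n - l + 1),
          (n.choose l : ℚ) * s1 (n - l) m * B m l * E k l
      = ∑ l ∈ range (n + 1), (n.choose l : ℚ) * (∑ m ∈ range (n - l + 1), s1 (n - l) m * B m l) *
          E k l := by
        simp only [mul_sum, sum_mul, mul_assoc]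
    _ = ∑ l ∈ range (n + 1), s1 n l * E k l :=
        sum_congr rfl fun l hl => by
          rw [choose_mul_sum_s1_mul_B (Nat.lt_succ_iff.mp (mem_range.mp hl))]
    _ = Ch k n := by
        rw [sum_s1_mul_E, Ch, div_pow]
        ring

theorem changhee_from_bernoulli_euler (n k : ℕ) (hk : 1 ≤ k) :
    ∑ l ∈ range (n + 1), ∑ m ∈ range (n - l + 1),
        (n.choose l : ℚ) * s1 (n - l) m * B m l * E k l = Ch k n :=
  changhee_from_bernoulli_euler_general n k
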